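/- arXiv:2509.00360 — 7 statements merged into one kernel-verified Lean document; each statement's English description precedes it below -/
import Mathlib

section
/- If the semantic realizability checker is under-approximate (i.e., realizable(ω,φ) implies the existence of a continuation ω' with φ(parse(ωω'))), then the constrained decoding algorithm is sound: any complete string it returns satisfies the constraint φ on its parse. -/
/-- The set of prefixes that the constrained-decoding worklist algorithm may ever
enqueue: it starts from the empty string, and whenever a prefix `ω` has been
dequeued, every one-token extension `ω ++ [τ]` with `τ ≠ END` that passes the
realizability check is enqueued. -/
inductive Enqueued {Tok : Type*} (realizable : List Tok → Prop) (END : Tok) :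
    List Tok → Prop
  | empty : Enqueued realizable END []
  | step {ω : List Tok} {τ : Tok} :
      Enqueued realizable END ω → realizable (ω ++ [τ]) → τ ≠ END →
      Enqueued realizable END (ω ++ [τ])

/-- The algorithm returns a complete string `ω` exactly when `ω = ω₀ ++ [END]`
for some dequeued prefix `ω₀` and `ω` passes the realizability check. -/
def Returns {Tok : Type*} (realizable : List Tok → Prop) (END : Tok)
    (ω : List Tok) : Prop :=
  ∃ ω₀, Enqueued realizable END ω₀ ∧ ω = ω₀ ++ [END] ∧ realizable ω

theorem List.eq_nil_of_not_mem_dropLast_append_cons {α : Type*} {a : α} {xs ys : List α}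
    (h : a ∉ (xs ++ a :: ys).dropLast) : ys = [] := by
  rcases ys with _ | ⟨b, ys⟩
  · rfl
  · rw [List.dropLast_append_of_ne_nil (List.cons_ne_nil a _)] at h
    simp at h

/-- **Soundness of constrained decoding with an under-approximate checker.**
If the realizability checker is under-approximate, any complete string returned
by the constrained decoding algorithm parses to an AST satisfying `φ`. -/
theorem soundness_of_underapproximate
    {Tok AST : Type*} (END : Tok)
    (parse : List Tok → Option AST) (φ : AST → Prop)
    (realizable : List Tok → Prop)
    -- every string satisfying φ contains END exactly once, in the final position
    (hend : ∀ ω : List Tok, (∃ t, parse ω = some t ∧ φ t) →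
      ω.getLast? = some END ∧ END ∉ ω.dropLast)
    -- the checker is under-approximate
    (hunder : ∀ ω : List Tok, realizable ω →
      ∃ ω' : List Tok, ∃ t, parse (ω ++ ω') = some t ∧ φ t) :
    ∀ ω : List Tok, Returns realizable END ω → ∃ t, parse ω = some t ∧ φ t := by
  rintro ω ⟨ω₀, -, rfl, hreal⟩
  obtain ⟨ω', t, hparse, hφ⟩ := hunder _ hreal
  -- `ω₀ ++ [END]` already ends in `END`, so its satisfying continuation must be empty.
  have hω' : ω' = [] :=
    List.eq_nil_of_not_mem_dropLast_append_cons (by simpa using (hend _ ⟨t, hparse, hφ⟩).2)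
  subst hω'
  exact ⟨t, by simpa using hparse, hφ⟩
end

section
/- If the semantic realizability checker is both over-approximate and consistent, and the worklist implements fair enumeration (every enqueued string is eventually dequeued), then constrained decoding is complete: if there exists a string ω ending in END with φ(parse(ω)), the algorithm eventually returns some string satisfying φ. -/
/-! The witness `ω = ω₀ ++ [END]` has no `END` inside `ω₀`, and every prefix of `ω₀` extends to
`ω`, so over-approximation makes each of them realizable. Fairness then dequeues the prefixes of
`ω₀` one token at a time, so `ω₀` itself is dequeued, and at that point `ω₀ ++ [END] = ω` passes
the check. -/

namespace ConstrainedDecoding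

variable {Tok : Type*} (END : Tok) (realizable : List Tok → Prop) (seq : ℕ → List Tok)

theorem exists_seq_eq_of_forall_prefix_realizable (hstart : seq 0 = [])
    (hfair : ∀ (n : ℕ) (τ : Tok), τ ≠ END → realizable (seq n ++ [τ]) →
      ∃ m : ℕ, seq m = seq n ++ [τ])
    (p : List Tok) (hEND : END ∉ p) (hreal : ∀ q, q <+: p → realizable q) :
    ∃ n, seq n = p := by
  induction p using List.reverseRecOn with
  | nil => exact ⟨0, hstart⟩
  | append_singleton q τ ih =>
    have hτ : τ ≠ END := fun h => hEND (by simp [h])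
    obtain ⟨n, rfl⟩ := ih (fun h => hEND (List.mem_append_left _ h))
      fun r hr => hreal r (hr.trans (List.prefix_append q [τ]))
    exact hfair n τ hτ (hreal _ (List.prefix_refl _))

end ConstrainedDecoding

open ConstrainedDecoding in
/-- A run of the worklist algorithm is modelled by the sequence `seq` of dequeued prefixes; it
returns at step `n` when `seq n ++ [END]` passes the realizability check. -/
theorem completeness_of_fair_constrained_decoding_general
    {Tok AST : Type*} (END : Tok)
    (parse : List Tok → Option AST) (φ : AST → Prop)
    (realizable : List Tok → Prop)
    -- every string satisfying φ contains END exactly once, in the final position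
    (hend : ∀ ω : List Tok, (∃ t, parse ω = some t ∧ φ t) →
      ω.getLast? = some END ∧ END ∉ ω.dropLast)
    -- over-approximate checker
    (hover : ∀ ω : List Tok,
      (∃ ω' : List Tok, ∃ t, parse (ω ++ ω') = some t ∧ φ t) → realizable ω)
    -- the run of the algorithm
    (seq : ℕ → List Tok)
    (hstart : seq 0 = [])
    -- fair enumeration: every enqueued string is eventually dequeued
    (hfair : ∀ (n : ℕ) (τ : Tok), τ ≠ END → realizable (seq n ++ [τ]) →
      ∃ m : ℕ, seq m = seq n ++ [τ])
    -- there exists a complete string satisfying φ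
    (hex : ∃ ω : List Tok, ω.getLast? = some END ∧ ∃ t, parse ω = some t ∧ φ t) :
    ∃ n : ℕ, realizable (seq n ++ [END]) ∧
      ∃ t, parse (seq n ++ [END]) = some t ∧ φ t := by
  obtain ⟨ω, hlast, t, hparse, hφ⟩ := hex
  have hω : ω.dropLast ++ [END] = ω := List.dropLast_append_getLast? END hlast
  have hprefix : ∀ q, q <+: ω.dropLast → realizable q := by
    rintro q ⟨s, hs⟩
    exact hover q ⟨s ++ [END], t, by rwa [← List.append_assoc, hs, hω], hφ⟩
  obtain ⟨n, hn⟩ := exists_seq_eq_of_forall_prefix_realizable END realizable seq hstart hfair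
    ω.dropLast (hend ω ⟨t, hparse, hφ⟩).2 hprefix
  refine ⟨n, ?_⟩
  rw [hn, hω]
  exact ⟨hover ω ⟨[], t, by rwa [List.append_nil], hφ⟩, t, hparse, hφ⟩

/-- **Completeness of constrained decoding with an over-approximate and
consistent checker under fair enumeration.**

We model a (non-returning portion of a) run of the worklist algorithm by the
sequence `seq : ℕ → List Tok` of dequeued prefixes: the empty string is dequeued
first, every dequeued string other than the first is a realizable one-token
non-`END` extension of a previously dequeued string, and fairness says that every
realizable non-`END` one-token extension of a dequeued string (i.e. every
enqueued string) is eventually dequeued.  The algorithm returns at step `n`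
when `seq n ++ [END]` passes the realizability check.

If the checker is over-approximate and consistent, and some complete string
(ending in `END`) satisfies `φ`, then the run eventually reaches a return event,
and the returned string satisfies `φ`. -/
theorem completeness_of_fair_constrained_decoding
    {Tok AST : Type*} (END : Tok)
    (parse : List Tok → Option AST) (φ : AST → Prop)
    (realizable : List Tok → Prop)
    -- every string satisfying φ contains END exactly once, in the final position
    (hend : ∀ ω : List Tok, (∃ t, parse ω = some t ∧ φ t) →
      ω.getLast? = some END ∧ END ∉ ω.dropLast)
    -- over-approximate checker
    (hover : ∀ ω : List Tok,
      (∃ ω' : List Tok, ∃ t, parse (ω ++ ω') = some t ∧ φ t) → realizable ω)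
    -- consistent checker
    (hcons : ∀ ω : List Tok, ω.getLast? = some END →
      (realizable ω ↔ ∃ t, parse ω = some t ∧ φ t))
    -- the run of the algorithm
    (seq : ℕ → List Tok)
    (hstart : seq 0 = [])
    (hstep : ∀ n : ℕ, 0 < n → ∃ m < n, ∃ τ : Tok,
      τ ≠ END ∧ seq n = seq m ++ [τ] ∧ realizable (seq n))
    -- fair enumeration: every enqueued string is eventually dequeued
    (hfair : ∀ (n : ℕ) (τ : Tok), τ ≠ END → realizable (seq n ++ [τ]) →
      ∃ m : ℕ, seq m = seq n ++ [τ])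
    -- there exists a complete string satisfying φ
    (hex : ∃ ω : List Tok, ω.getLast? = some END ∧ ∃ t, parse ω = some t ∧ φ t) :
    ∃ n : ℕ, realizable (seq n ++ [END]) ∧
      ∃ t, parse (seq n ++ [END]) = some t ∧ φ t :=
  completeness_of_fair_constrained_decoding_general END parse φ realizable hend hover seq hstart
    hfair hex
end

section
/- The nonemptiness predicate on program spaces computed by least-fixpoint iteration is correct: for the grammar of spaces built from Empty, finite Union, Lit over a regex, and constructor nodes with child spaces (possibly with cycles, i.e., interpreted as a regular system of equations), the least fixpoint of the rules 'Empty ↦ false, Union children ↦ any child nonempty, Lit r ↦ r's language nonempty, Node children ↦ all children nonempty' holds for a space variable iff the set of finite ASTs denoted by that variable is nonempty. -/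
/-- Finite ASTs: leaves carry strings over the alphabet `σ`, internal nodes carry
a constructor symbol and finitely many children. -/
inductive PSTree (Sym σ : Type) : Type
  | leaf (w : List σ)
  | node (s : Sym) (k : ℕ) (children : Fin k → PSTree Sym σ)

/-- Right-hand sides of the equations of a program space system: empty space,
finite union of variables, a set of leaves described by a (regular) language,
or a constructor node applied to variables. -/
inductive PSRhs (n : ℕ) (Sym σ : Type) : Type
  | empty
  | union (vars : List (Fin n))
  | lit (R : Set (List σ))
  | node (s : Sym) (k : ℕ) (args : Fin k → Fin n)

/-- The denotation of a program space system, defined as the least solution of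
the set equations: `⟦Empty⟧ = ∅`, `⟦Union⟧` is the union of the denotations,
`⟦Lit R⟧ = {leaf w | w ∈ R}`, and `⟦Node(s, X₁,…,Xₖ)⟧` consists of the nodes
`node s t₁ … tₖ` with `tᵢ ∈ ⟦Xᵢ⟧`.  As an inductive predicate, `Derives sys i t`
is exactly the least fixpoint of these rules, i.e. `t ∈ ⟦Xᵢ⟧`. -/
inductive Derives {n : ℕ} {Sym σ : Type} (sys : Fin n → PSRhs n Sym σ) :
    Fin n → PSTree Sym σ → Prop
  | lit {i : Fin n} {R : Set (List σ)} {w : List σ} :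
      sys i = .lit R → w ∈ R → Derives sys i (.leaf w)
  | union {i : Fin n} {vars : List (Fin n)} {j : Fin n} {t : PSTree Sym σ} :
      sys i = .union vars → j ∈ vars → Derives sys j t → Derives sys i t
  | node {i : Fin n} {s : Sym} {k : ℕ} {args : Fin k → Fin n}
      {ts : Fin k → PSTree Sym σ} :
      sys i = .node s k args → (∀ j : Fin k, Derives sys (args j) (ts j)) →
      Derives sys i (.node s k ts)

/-- The nonemptiness predicate computed by least-fixpoint (Kleene) iteration
over the Boolean lattice: as an inductive predicate, `NonemptyVar sys i` is
exactly the least fixpoint of the rules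
`Empty ↦ false`, `Union ↦ any child nonempty`, `Lit r ↦ r nonempty`,
`Node ↦ all children nonempty`. -/
inductive NonemptyVar {n : ℕ} {Sym σ : Type} (sys : Fin n → PSRhs n Sym σ) :
    Fin n → Prop
  | lit {i : Fin n} {R : Set (List σ)} {w : List σ} :
      sys i = .lit R → w ∈ R → NonemptyVar sys i
  | union {i : Fin n} {vars : List (Fin n)} {j : Fin n} :
      sys i = .union vars → j ∈ vars → NonemptyVar sys j → NonemptyVar sys i
  | node {i : Fin n} {s : Sym} {k : ℕ} {args : Fin k → Fin n} :
      sys i = .node s k args → (∀ j : Fin k, NonemptyVar sys (args j)) →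
      NonemptyVar sys i

/-- **Correctness of the least-fixpoint nonemptiness check**: the fixpoint
predicate holds of a space variable iff the set of finite ASTs denoted by that
variable is nonempty. -/
theorem nonemptyVar_iff_denotation_nonempty
    {n : ℕ} {Sym σ : Type} (sys : Fin n → PSRhs n Sym σ) (i : Fin n) :
    NonemptyVar sys i ↔ ∃ t : PSTree Sym σ, Derives sys i t := by
  constructor
  · intro h
    induction h with
    | lit hR hw => exact ⟨_, .lit hR hw⟩
    | union hU hj _ ih => obtain ⟨t, ht⟩ := ih; exact ⟨t, .union hU hj ht⟩
    | node hN _ ih =>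
      choose ts hts using ih
      exact ⟨_, .node hN hts⟩
  · rintro ⟨t, ht⟩
    induction ht with
    | lit hR hw => exact .lit hR hw
    | union hU hj _ ih => exact .union hU hj ih
    | node hN _ ih => exact .node hN ih
end

section
/- The denotation of a program space system (regular tree equations over Empty, Union, Lit, and constructor nodes) is a regular tree language, and conversely every regular tree language arises as the denotation of some program space system. -/
/-- Finite trees over a ranked alphabet `Sym` (with arity function `arity`),
whose leaves carry strings over `σ`. -/
inductive RkTree (Sym σ : Type) (arity : Sym → ℕ) : Type
  | leaf (w : List σ)
  | node (s : Sym) (children : Fin (arity s) → RkTree Sym σ arity)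

/-- Right-hand sides of program space equations over variables `V`. -/
inductive RkRhs (V Sym σ : Type) (arity : Sym → ℕ) : Type
  | empty
  | union (vars : List V)
  | lit (R : Language σ)
  | node (s : Sym) (args : Fin (arity s) → V)

/-- A program space system: finitely many variables, one equation each. -/
structure RkSystem (Sym σ : Type) (arity : Sym → ℕ) where
  V : Type
  [finV : Fintype V]
  rhs : V → RkRhs V Sym σ arity

/-- The denotation of a program space system, as the least solution of the set
equations (an inductive predicate is exactly the least fixpoint). -/
inductive RkSystem.Derives {Sym σ : Type} {arity : Sym → ℕ}
    (S : RkSystem Sym σ arity) : S.V → RkTree Sym σ arity → Prop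
  | lit {i : S.V} {R : Language σ} {w : List σ} :
      S.rhs i = .lit R → w ∈ R → RkSystem.Derives S i (.leaf w)
  | union {i : S.V} {vars : List S.V} {j : S.V} {t : RkTree Sym σ arity} :
      S.rhs i = .union vars → j ∈ vars → RkSystem.Derives S j t →
      RkSystem.Derives S i t
  | node {i : S.V} {s : Sym} {args : Fin (arity s) → S.V}
      {ts : Fin (arity s) → RkTree Sym σ arity} :
      S.rhs i = .node s args →
      (∀ j : Fin (arity s), RkSystem.Derives S (args j) (ts j)) →
      RkSystem.Derives S i (.node s ts)

/-- A system all of whose leaf languages are regular string languages. -/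
def RkSystem.Regular {Sym σ : Type} {arity : Sym → ℕ}
    (S : RkSystem Sym σ arity) : Prop :=
  ∀ (i : S.V) (R : Language σ), S.rhs i = .lit R → R.IsRegular

/-- A nondeterministic (bottom-up) finite tree automaton over the ranked
alphabet `Sym`, with leaves carrying strings from regular string languages. -/
structure RkNTA (Sym σ : Type) (arity : Sym → ℕ) where
  Q : Type
  [finQ : Fintype Q]
  leafLang : Q → Language σ
  leafReg : ∀ q : Q, (leafLang q).IsRegular
  trans : (s : Sym) → (Fin (arity s) → Q) → Q → Prop
  final : Set Q

/-- Runs of a tree automaton. -/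
inductive RkNTA.Run {Sym σ : Type} {arity : Sym → ℕ} (A : RkNTA Sym σ arity) :
    A.Q → RkTree Sym σ arity → Prop
  | leaf {q : A.Q} {w : List σ} : w ∈ A.leafLang q → RkNTA.Run A q (.leaf w)
  | node {q : A.Q} {s : Sym} {qs : Fin (arity s) → A.Q}
      {ts : Fin (arity s) → RkTree Sym σ arity} :
      A.trans s qs q → (∀ j : Fin (arity s), RkNTA.Run A (qs j) (ts j)) →
      RkNTA.Run A q (.node s ts)

/-- The tree language accepted by a tree automaton. -/
def RkNTA.lang {Sym σ : Type} {arity : Sym → ℕ} (A : RkNTA Sym σ arity) :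
    Set (RkTree Sym σ arity) :=
  {t | ∃ q ∈ A.final, RkNTA.Run A q t}

/-- Regular tree languages: those recognized by a finite tree automaton. -/
def IsRegularTreeLang {Sym σ : Type} {arity : Sym → ℕ}
    (L : Set (RkTree Sym σ arity)) : Prop :=
  ∃ A : RkNTA Sym σ arity, A.lang = L

/-
Systems to automata: take the variables as states. A variable whose equation is a union
behaves like every variable reachable from it through union equations, so a state `q` reads a
leaf `w` iff `w` lies in one of the finitely many literal languages reachable from `q` (a
regular language), and it has a transition `s(q₁, …, qₙ) → q` iff some variable reachable from
`q` has the equation `s(q₁, …, qₙ)`. Automata to systems: one variable per state, being the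
union of a literal variable for its leaf language and one node variable per transition into it
(finitely many, since the alphabet is finite), plus a start variable, the union of the final
states.
-/

namespace Language

theorem isRegular_zero {T : Type} : (0 : Language T).IsRegular :=
  ⟨Unit, inferInstance, ⟨fun _ _ => (), (), ∅⟩, by ext; simp [DFA.mem_accepts]⟩

theorem IsRegular.finset_sup {T ι : Type} {s : Finset ι} {f : ι → Language T}
    (h : ∀ i ∈ s, (f i).IsRegular) : (s.sup f).IsRegular :=
  Finset.sup_induction isRegular_zero (fun _ h₁ _ h₂ => h₁.add h₂) h

end Language

section

variable {Sym σ : Type} {arity : Sym → ℕ}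

namespace RkRhs

variable {V : Type}

def litLang : RkRhs V Sym σ arity → Language σ
  | .lit R => R
  | _ => 0

theorem mem_litLang {r : RkRhs V Sym σ arity} {w : List σ} :
    w ∈ r.litLang ↔ ∃ R, r = .lit R ∧ w ∈ R := by
  cases r <;> simp [litLang, Language.notMem_zero]

end RkRhs

namespace RkSystem

variable (S : RkSystem Sym σ arity)

attribute [local instance] RkSystem.finV

def UnionStep (i j : S.V) : Prop :=
  ∃ vars, S.rhs i = .union vars ∧ j ∈ vars

variable {S}

section Inversion

variable {i : S.V} {t : RkTree Sym σ arity}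

theorem Derives.of_rhs_union {vars : List S.V} (h : S.rhs i = .union vars)
    (hd : S.Derives i t) : ∃ j ∈ vars, S.Derives j t := by
  cases hd with
  | union hu hmem hj =>
    rw [h] at hu
    cases hu
    exact ⟨_, hmem, hj⟩
  | _ => simp_all

theorem Derives.of_rhs_lit {R : Language σ} (h : S.rhs i = .lit R) (hd : S.Derives i t) :
    ∃ w ∈ R, t = .leaf w := by
  cases hd <;> simp_all

theorem Derives.of_rhs_node {s : Sym} {args : Fin (arity s) → S.V} (h : S.rhs i = .node s args)
    (hd : S.Derives i t) : ∃ ts, t = .node s ts ∧ ∀ k, S.Derives (args k) (ts k) := by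
  cases hd with
  | node hn hts =>
    rw [h] at hn
    cases hn
    exact ⟨_, rfl, hts⟩
  | _ => simp_all

end Inversion

theorem Derives.of_reflTransGen {i j : S.V} {t : RkTree Sym σ arity}
    (hij : Relation.ReflTransGen S.UnionStep i j) (hj : S.Derives j t) : S.Derives i t := by
  induction hij using Relation.ReflTransGen.head_induction_on with
  | refl => exact hj
  | head hstep _ ih =>
    obtain ⟨vars, hu, hmem⟩ := hstep
    exact .union hu hmem ih

theorem derives_leaf_iff {i : S.V} {w : List σ} :
    S.Derives i (.leaf w) ↔
      ∃ j, Relation.ReflTransGen S.UnionStep i j ∧ w ∈ (S.rhs j).litLang := by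
  refine ⟨fun h => ?_, fun ⟨j, hij, hw⟩ => ?_⟩
  · generalize ht : RkTree.leaf w = t at h
    induction h with
    | lit hl hw => cases ht; exact ⟨_, .refl, RkRhs.mem_litLang.2 ⟨_, hl, hw⟩⟩
    | union hu hmem _ ih =>
      obtain ⟨j, hij, hw⟩ := ih ht
      exact ⟨j, .head ⟨_, hu, hmem⟩ hij, hw⟩
    | node => cases ht
  · obtain ⟨R, hl, hw⟩ := RkRhs.mem_litLang.1 hw
    exact .of_reflTransGen hij (.lit hl hw)

theorem isRegular_leaves (hS : S.Regular) (i : S.V) :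
    Language.IsRegular {w | S.Derives i (.leaf w)} := by
  classical
  have hsup : ({w | S.Derives i (.leaf w)} : Language σ) =
      (Finset.univ.filter (Relation.ReflTransGen S.UnionStep i)).sup
        fun j => (S.rhs j).litLang := by
    refine Language.ext fun w => ?_
    rw [Finset.sup_eq_iSup]
    simp only [Language.mem_iSup, Finset.mem_filter, Finset.mem_univ, true_and, exists_prop]
    exact derives_leaf_iff
  rw [hsup]
  refine Language.IsRegular.finset_sup fun j _ => ?_
  rcases h : S.rhs j with _ | _ | R | _
  case lit => exact hS j R h
  all_goals exact Language.isRegular_zero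

def toNTA (hS : S.Regular) (F : Set S.V) : RkNTA Sym σ arity where
  Q := S.V
  leafLang i := {w | S.Derives i (.leaf w)}
  leafReg := S.isRegular_leaves hS
  trans s args i := ∃ j, Relation.ReflTransGen S.UnionStep i j ∧ S.rhs j = .node s args
  final := F

theorem run_toNTA_iff (hS : S.Regular) (F : Set S.V) {i : (S.toNTA hS F).Q}
    {t : RkTree Sym σ arity} :
    (S.toNTA hS F).Run i t ↔ S.Derives i t := by
  constructor
  · intro h
    induction h with
    | leaf hw => exact hw
    | node htr _ ih =>
      obtain ⟨j, hij, hj⟩ := htr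
      exact .of_reflTransGen hij (.node hj ih)
  · intro h
    induction h with
    | lit hl hw => exact .leaf (.lit hl hw)
    | union hu hmem _ ih =>
      -- a union step only prolongs the reachability path of the witness
      match ih with
      | .leaf hw => exact .leaf (.union hu hmem hw)
      | .node ⟨j, hij, hj⟩ hrun => exact .node ⟨j, .head ⟨_, hu, hmem⟩ hij, hj⟩ hrun
    | node hn _ ih => exact .node ⟨_, .refl, hn⟩ ih

theorem lang_toNTA (hS : S.Regular) (i : S.V) :
    (S.toNTA hS {i}).lang = {t | S.Derives i t} := by
  ext t
  exact ⟨fun ⟨_, rfl, h⟩ => (run_toNTA_iff hS _).1 h,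
    fun h => ⟨i, rfl, (run_toNTA_iff hS _).2 h⟩⟩

end RkSystem

namespace RkNTA

variable [Fintype Sym] (A : RkNTA Sym σ arity)

attribute [local instance] RkNTA.finQ

/-- Variables of `A.toSystem`: `none` is the start variable, `inl q` the state `q`,
`inr (inl q)` the leaf language of `q`, and `inr (inr ⟨s, qs⟩)` the transitions `s(qs) → _`. -/
abbrev SystemVar : Type := Option (A.Q ⊕ A.Q ⊕ Σ s, Fin (arity s) → A.Q)

open Classical in
noncomputable abbrev toSystem : RkSystem Sym σ arity where
  V := A.SystemVar
  rhs
    | none => .union ((Finset.univ.filter (· ∈ A.final)).toList.map (some ∘ .inl))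
    | some (.inl q) => .union (some (.inr (.inl q)) ::
        (Finset.univ.filter fun p : Σ s, Fin (arity s) → A.Q => A.trans p.1 p.2 q).toList.map
          (some ∘ .inr ∘ .inr))
    | some (.inr (.inl q)) => .lit (A.leafLang q)
    | some (.inr (.inr ⟨s, qs⟩)) => .node s fun k => some (.inl (qs k))

theorem toSystem_regular : A.toSystem.Regular := by
  rintro (_ | q | q | p) R h <;> cases h
  exact A.leafReg q

variable {A}

theorem derives_toSystem_state_cases {q : A.Q} {t : RkTree Sym σ arity}
    (h : A.toSystem.Derives (some (.inl q)) t) :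
    (∃ w ∈ A.leafLang q, t = .leaf w) ∨ ∃ s qs ts, A.trans s qs q ∧ t = .node s ts ∧
      ∀ k, A.toSystem.Derives (some (.inl (qs k))) (ts k) := by
  obtain ⟨j, hj, hd⟩ := h.of_rhs_union rfl
  simp only [List.mem_cons, List.mem_map, Finset.mem_toList, Finset.mem_filter, Finset.mem_univ,
    true_and] at hj
  rcases hj with rfl | ⟨⟨s, qs⟩, htr, rfl⟩
  · obtain ⟨w, hw, rfl⟩ := hd.of_rhs_lit rfl
    exact .inl ⟨w, hw, rfl⟩
  · obtain ⟨ts, rfl, hts⟩ := hd.of_rhs_node rfl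
    exact .inr ⟨s, qs, ts, htr, rfl, hts⟩

theorem derives_toSystem_state_iff_run {q : A.Q} {t : RkTree Sym σ arity} :
    A.toSystem.Derives (some (.inl q)) t ↔ A.Run q t := by
  refine ⟨fun h => ?_, fun h => ?_⟩
  · induction t generalizing q with
    | leaf w =>
      rcases derives_toSystem_state_cases h with ⟨w', hw, h'⟩ | ⟨s, qs, ts, -, h', -⟩ <;>
        cases h'
      exact .leaf hw
    | node s ts ih =>
      rcases derives_toSystem_state_cases h with ⟨w, -, h'⟩ | ⟨s', qs, ts', htr, h', hts⟩ <;>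
        cases h'
      exact .node htr fun k => ih k (hts k)
  · induction h with
    | leaf hw => exact .union rfl List.mem_cons_self (.lit rfl hw)
    | @node q s qs ts htr _ ih =>
      refine .union (j := some (.inr (.inr ⟨s, qs⟩))) rfl (List.mem_cons_of_mem _ ?_)
        (.node rfl ih)
      simpa using htr

theorem lang_toSystem : {t | A.toSystem.Derives none t} = A.lang := by
  ext t
  constructor
  · intro h
    obtain ⟨j, hj, hd⟩ := h.of_rhs_union rfl
    simp only [List.mem_map, Finset.mem_toList, Finset.mem_filter, Finset.mem_univ, true_and,
      Function.comp_apply] at hj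
    obtain ⟨q, hq, rfl⟩ := hj
    exact ⟨q, hq, derives_toSystem_state_iff_run.1 hd⟩
  · rintro ⟨q, hq, hrun⟩
    exact .union rfl (by simpa using hq) (derives_toSystem_state_iff_run.2 hrun)

end RkNTA

end

/-- **Program space systems denote exactly the regular tree languages**:
the denotation of each variable of a program space system (with regular leaf
languages) is a regular tree language, and conversely every regular tree
language is the denotation of some variable of some such system. -/
theorem rkSystem_denotation_regular_iff
    (Sym σ : Type) [Fintype Sym] (arity : Sym → ℕ) :
    (∀ (S : RkSystem Sym σ arity), S.Regular → ∀ i : S.V,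
      IsRegularTreeLang {t | S.Derives i t}) ∧
    (∀ L : Set (RkTree Sym σ arity), IsRegularTreeLang L →
      ∃ (S : RkSystem Sym σ arity) (_ : S.Regular) (i : S.V),
        {t | S.Derives i t} = L) :=
  ⟨fun S hS i => ⟨S.toNTA hS {i}, S.lang_toNTA hS i⟩,
    fun _ ⟨A, hA⟩ => ⟨A.toSystem, A.toSystem_regular, none, hA ▸ A.lang_toSystem⟩⟩
end

section
/- The set of well-typed terms of the simply-typed lambda calculus (over a base type, with application and λ-abstraction, closed terms typable in the empty context) is not a regular tree language. -/
/-- Trees over the finite ranked alphabet of de Bruijn lambda terms: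
a nullary symbol `varzero` (the variable with index 0), a unary symbol
`varsucc` (successor of a variable index), a unary symbol `lam`
(λ-abstraction) and a binary symbol `app` (application). -/
inductive LamTree : Type
  | varzero
  | varsucc (t : LamTree)
  | lam (t : LamTree)
  | app (t u : LamTree)

/-- Simple types over one base type. -/
inductive STy : Type
  | base
  | arrow (a b : STy)

/-- The tree is a (well-formed) variable, i.e. an iterated successor of `varzero`. -/
inductive LamTree.IsVar : LamTree → Prop
  | zero : LamTree.IsVar .varzero
  | succ {t : LamTree} : LamTree.IsVar t → LamTree.IsVar (.varsucc t)

/-- Typing judgment of the simply-typed lambda calculus in de Bruijn style: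
contexts are lists of types, `varzero` picks the head of the context, and
`varsucc` shifts a variable one binder outward. -/
inductive HasSTy : List STy → LamTree → STy → Prop
  | zero {Γ : List STy} {A : STy} : HasSTy (A :: Γ) .varzero A
  | succ {Γ : List STy} {B A : STy} {t : LamTree} :
      t.IsVar → HasSTy Γ t A → HasSTy (B :: Γ) (.varsucc t) A
  | lam {Γ : List STy} {A B : STy} {t : LamTree} :
      HasSTy (A :: Γ) t B → HasSTy Γ (.lam t) (.arrow A B)
  | app {Γ : List STy} {A B : STy} {f x : LamTree} :
      HasSTy Γ f (.arrow A B) → HasSTy Γ x A → HasSTy Γ (.app f x) B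

/-- A nondeterministic bottom-up finite tree automaton over the lambda-term
alphabet: a finite state set, sets of transitions for each symbol, and a set
of final states. -/
structure LamNTA where
  Q : Type
  [finQ : Fintype Q]
  tzero : Set Q
  tsucc : Q → Q → Prop
  tlam : Q → Q → Prop
  tapp : Q → Q → Q → Prop
  final : Set Q

/-- Runs of such a tree automaton. -/
inductive LamNTA.Run (A : LamNTA) : A.Q → LamTree → Prop
  | varzero {q : A.Q} : q ∈ A.tzero → LamNTA.Run A q .varzero
  | varsucc {q q' : A.Q} {t : LamTree} :
      A.tsucc q' q → LamNTA.Run A q' t → LamNTA.Run A q (.varsucc t)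
  | lam {q q' : A.Q} {t : LamTree} :
      A.tlam q' q → LamNTA.Run A q' t → LamNTA.Run A q (.lam t)
  | app {q q₁ q₂ : A.Q} {t u : LamTree} :
      A.tapp q₁ q₂ q → LamNTA.Run A q₁ t → LamNTA.Run A q₂ u →
      LamNTA.Run A q (.app t u)

/-- A tree language of lambda trees is regular if it is recognized by a finite
bottom-up tree automaton. -/
def LamRegular (L : Set LamTree) : Prop :=
  ∃ A : LamNTA, {t | ∃ q ∈ A.final, A.Run q t} = L

namespace STLCAux

/-- The variable with de Bruijn index `k`. -/
def var (k : ℕ) : LamTree := LamTree.varsucc^[k] LamTree.varzero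

lemma var_succ (p : ℕ) : var (p + 1) = .varsucc (var p) :=
  Function.iterate_succ_apply' _ _ _

lemma varsucc_iter_var (d x : ℕ) :
    LamTree.varsucc^[d] (var x) = var (d + x) := by
  rw [var, var, ← Function.iterate_add_apply]

lemma isVar_var (k : ℕ) : (var k).IsVar := by
  induction k with
  | zero => exact .zero
  | succ k ih => rw [var_succ]; exact .succ ih

lemma hasSTy_var_replicate : ∀ (k n : ℕ), k < n →
    HasSTy (List.replicate n STy.base) (var k) STy.base := by
  intro k
  induction k with
  | zero =>
    intro n hn
    obtain ⟨m, rfl⟩ : ∃ m, n = m + 1 := ⟨n - 1, by omega⟩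
    rw [List.replicate_succ]
    exact .zero
  | succ k ih =>
    intro n hn
    obtain ⟨m, rfl⟩ : ∃ m, n = m + 1 := ⟨n - 1, by omega⟩
    rw [List.replicate_succ, var_succ]
    exact .succ (isVar_var k) (ih m (by omega))

lemma typable_lams : ∀ (L Γ : List STy) (t : LamTree) (B : STy),
    HasSTy (L ++ Γ) t B → ∃ C, HasSTy Γ (LamTree.lam^[L.length] t) C := by
  intro L
  induction L with
  | nil => exact fun Γ t B h => ⟨B, h⟩
  | cons A L ih =>
    intro Γ t B h
    have h1 : HasSTy (L ++ Γ) (.lam t) (.arrow A B) := .lam h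
    obtain ⟨C, hC⟩ := ih Γ _ _ h1
    refine ⟨C, ?_⟩
    rw [List.length_cons, Function.iterate_succ_apply]
    exact hC

lemma hasSTy_var_lt : ∀ {Γ : List STy} {t : LamTree} {A : STy},
    HasSTy Γ t A → ∀ p, t = var p → p < Γ.length := by
  intro Γ t A h
  induction h with
  | zero =>
    intro p hp
    cases p with
    | zero => simp
    | succ p => rw [var_succ] at hp; cases hp
  | succ hv h ih =>
    intro p hp
    cases p with
    | zero => cases hp
    | succ p =>
      rw [var_succ] at hp
      cases hp
      have := ih p rfl
      simpa using Nat.succ_lt_succ this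
  | lam h ih =>
    intro p hp
    cases p with
    | zero => cases hp
    | succ p => rw [var_succ] at hp; cases hp
  | app h1 h2 ih1 ih2 =>
    intro p hp
    cases p with
    | zero => cases hp
    | succ p => rw [var_succ] at hp; cases hp

lemma lams_inv : ∀ (n : ℕ) (Γ : List STy) (t : LamTree) (A : STy),
    HasSTy Γ (LamTree.lam^[n] t) A →
    ∃ Γ' B, Γ'.length = n + Γ.length ∧ HasSTy Γ' t B := by
  intro n
  induction n with
  | zero => exact fun Γ t A h => ⟨Γ, A, (Nat.zero_add _).symm, h⟩
  | succ n ih =>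
    intro Γ t A h
    rw [Function.iterate_succ_apply] at h
    obtain ⟨Γ', B, hlen, hB⟩ := ih Γ _ _ h
    cases hB with
    | lam h' =>
      refine ⟨_, _, ?_, h'⟩
      rw [List.length_cons, hlen]; omega

lemma not_typable (n p : ℕ) (A : STy)
    (h : HasSTy [] (LamTree.lam^[n] (var p)) A) : p < n := by
  obtain ⟨Γ', B, hlen, hB⟩ := lams_inv n [] _ _ h
  have := hasSTy_var_lt hB p rfl
  simp at hlen
  omega

lemma run_var_states (Aut : LamNTA) : ∀ (m : ℕ) (q : Aut.Q),
    Aut.Run q (var m) →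
    ∃ st : ℕ → Aut.Q, st m = q ∧
      (∀ i, i < m → Aut.tsucc (st i) (st (i + 1))) ∧
      (∀ i, i ≤ m → Aut.Run (st i) (var i)) := by
  intro m
  induction m with
  | zero =>
    intro q h
    refine ⟨fun _ => q, rfl, fun i hi => absurd hi (by omega), fun i hi => ?_⟩
    have : i = 0 := by omega
    subst this
    exact h
  | succ m ih =>
    intro q h
    rw [var_succ] at h
    cases h with
    | varsucc htr hr =>
      obtain ⟨st, hstm, hst, hruns⟩ := ih _ hr
      refine ⟨fun i => if i ≤ m then st i else q, by simp, ?_, ?_⟩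
      · intro i hi
        by_cases hc : i < m
        · have h1 : i ≤ m := by omega
          have h2 : i + 1 ≤ m := by omega
          simpa [h1, h2] using hst i hc
        · have : i = m := by omega
          subst this
          have h1 : i ≤ i := le_refl i
          have h2 : ¬ (i + 1 ≤ i) := by omega
          simpa [h1, h2, hstm] using htr
      · intro i hi
        by_cases hc : i ≤ m
        · simpa [hc] using hruns i hc
        · have : i = m + 1 := by omega
          subst this
          have h2 : ¬ (m + 1 ≤ m) := by omega
          simp only [h2, if_false]
          rw [var_succ]
          exact .varsucc htr hr

lemma run_pump (Aut : LamNTA) (st : ℕ → Aut.Q) (m : ℕ)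
    (htr : ∀ i, i < m → Aut.tsucc (st i) (st (i + 1))) :
    ∀ d i, i + d ≤ m → ∀ s, Aut.Run (st i) s →
      Aut.Run (st (i + d)) (LamTree.varsucc^[d] s) := by
  intro d
  induction d with
  | zero => exact fun i _ s h => h
  | succ d ih =>
    intro i hle s h
    have h1 := ih i (by omega) s h
    have h2 := htr (i + d) (by omega)
    rw [Function.iterate_succ_apply']
    exact .varsucc h2 h1

lemma run_lams_ctx (Aut : LamNTA) : ∀ (n : ℕ) (q : Aut.Q) (t : LamTree),
    Aut.Run q (LamTree.lam^[n] t) →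
    ∃ q', Aut.Run q' t ∧
      ∀ s, Aut.Run q' s → Aut.Run q (LamTree.lam^[n] s) := by
  intro n
  induction n with
  | zero => exact fun q t h => ⟨q, h, fun s hs => hs⟩
  | succ n ih =>
    intro q t h
    rw [Function.iterate_succ_apply'] at h
    cases h with
    | lam htr hr =>
      obtain ⟨q', h1, h2⟩ := ih _ _ hr
      refine ⟨q', h1, fun s hs => ?_⟩
      rw [Function.iterate_succ_apply']
      exact .lam htr (h2 s hs)

end STLCAux

open STLCAux in
/-- **The set of closed simply-typable lambda terms is not a regular tree
language.** -/
theorem stlc_typable_not_regular :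
    ¬ LamRegular {t : LamTree | ∃ A : STy, HasSTy [] t A} := by
  rintro ⟨Aut, hA⟩
  haveI := Aut.finQ
  set m := Fintype.card Aut.Q with hm
  set n := m + 1 with hn
  -- the term `λ^n (var m)` is typable
  have hty : ∃ A, HasSTy [] (LamTree.lam^[n] (var m)) A := by
    have hv : HasSTy (List.replicate n STy.base ++ []) (var m) STy.base := by
      rw [List.append_nil]
      exact hasSTy_var_replicate m n (by omega)
    have := typable_lams (List.replicate n STy.base) [] (var m) STy.base hv
    simpa using this
  have hacc : LamTree.lam^[n] (var m) ∈ {t | ∃ q ∈ Aut.final, Aut.Run q t} := by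
    rw [hA]; exact hty
  obtain ⟨qf, hqf, hrun⟩ := hacc
  obtain ⟨q', hq't, hctx⟩ := run_lams_ctx Aut n qf _ hrun
  obtain ⟨st, hstm, htr, hruns⟩ := run_var_states Aut m q' hq't
  -- pigeonhole: two equal states on the variable spine
  obtain ⟨i, j, hij, heq⟩ :=
    Fintype.exists_ne_map_eq_of_card_lt (fun i : Fin (m + 1) => st i.val)
      (by simp [hm])
  -- wlog order
  obtain ⟨a, b, hab, hble, heq'⟩ :
      ∃ a b : ℕ, a < b ∧ b ≤ m ∧ st a = st b := by
    rcases lt_or_gt_of_ne (fun h : (i : Fin (m+1)) = j => hij h) with h | h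
    · exact ⟨i.val, j.val, h, by omega, heq⟩
    · exact ⟨j.val, i.val, h, by omega, heq.symm⟩
  -- pump once: from `Run (st a) (var b)` (via `heq'`) to `Run (st b) (var (b - a + b))`
  have hb_run : Aut.Run (st a) (var b) := heq' ▸ hruns b hble
  have h1 : Aut.Run (st b) (var (b - a + b)) := by
    have := run_pump Aut st m htr (b - a) a (by omega) (var b) hb_run
    rw [varsucc_iter_var] at this
    have hba : a + (b - a) = b := by omega
    rwa [hba] at this
  -- push up to the top of the spine
  have h2 : Aut.Run (st m) (var (m - b + (b - a + b))) := by
    have := run_pump Aut st m htr (m - b) b (by omega) _ h1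
    rw [varsucc_iter_var] at this
    have hmb : b + (m - b) = m := by omega
    rwa [hmb] at this
  -- so the non-typable term `λ^n (var (m + (b - a)))` is accepted
  have h3 : Aut.Run qf (LamTree.lam^[n] (var (m - b + (b - a + b)))) :=
    hctx _ (hstm ▸ h2)
  have hmem : LamTree.lam^[n] (var (m - b + (b - a + b))) ∈
      {t : LamTree | ∃ A : STy, HasSTy [] t A} := by
    rw [← hA]; exact ⟨qf, hqf, h3⟩
  obtain ⟨A, hA'⟩ := hmem
  have := not_typable n _ A hA'
  omega
end

section
/- Derivative-based recognition for context-free grammars is correct on single-symbol steps: for a context-free grammar G over terminal alphabet Σ with language L(A) for nonterminal/expression A, the derivative operation satisfies L(d_a(A)) = {w | aw ∈ L(A)}, where d is defined by: d of the empty language is empty; d_a of a single-terminal expression matching set R is ε if a ∈ R else empty; d distributes over choice; and for a sequence A₁A₂…Aₙ, d_a(A₁…Aₙ) = d_a(A₁)·A₂…Aₙ + ν(A₁)·d_a(A₂…Aₙ) with ν the nullability restriction (ν(A) = {ε} if ε ∈ L(A), else ∅), interpreted coinductively/as a least fixpoint over the grammar's equations. -/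
/-- Grammar expressions of a context-free grammar, viewed as a system of
language equations: the empty language, the empty string, single-terminal
classes `R ⊆ σ`, finite choice, finite sequencing, nonterminals, and the
nullability restriction `ν(e)` (whose language is `{ε}` if `ε ∈ L(e)` and `∅`
otherwise). -/
inductive GExpr (σ N : Type) : Type
  | empty
  | eps
  | tm (R : Set σ)
  | alt (es : List (GExpr σ N))
  | seq (es : List (GExpr σ N))
  | var (A : N)
  | null (e : GExpr σ N)

/-- The language semantics of grammar expressions as the least solution of the
grammar's equations (an inductive predicate is exactly the least fixpoint):
`Gen rules e w` means `w ∈ L(e)`. -/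
inductive Gen {σ N : Type} (rules : N → GExpr σ N) : GExpr σ N → List σ → Prop
  | eps : Gen rules .eps []
  | tm {R : Set σ} {a : σ} : a ∈ R → Gen rules (.tm R) [a]
  | alt {es : List (GExpr σ N)} {e : GExpr σ N} {w : List σ} :
      e ∈ es → Gen rules e w → Gen rules (.alt es) w
  | seqNil : Gen rules (.seq []) []
  | seqCons {e : GExpr σ N} {es : List (GExpr σ N)} {w₁ w₂ : List σ} :
      Gen rules e w₁ → Gen rules (.seq es) w₂ →
      Gen rules (.seq (e :: es)) (w₁ ++ w₂)
  | var {A : N} {w : List σ} : Gen rules (rules A) w → Gen rules (.var A) w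
  | null {e : GExpr σ N} : Gen rules e [] → Gen rules (.null e) []

/-- The single-character derivative of a grammar expression.  Derivatives of
nonterminals are new nonterminals: we work over the extended nonterminal set
`N × List σ`, where `(A, u)` stands for the iterated derivative of `A` along
`u`.  The clauses are exactly those of derivative-based parsing:
`d_a(∅) = ∅`, `d_a(ε) = ∅`, `d_a(R) = ε` if `a ∈ R` else `∅`, `d_a`
distributes over choice, and
`d_a(e·es) = d_a(e)·es + ν(e)·d_a(es)`. -/
noncomputable def gderiv {σ N : Type} (a : σ) :
    GExpr σ (N × List σ) → GExpr σ (N × List σ)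
  | .empty => .empty
  | .eps => .empty
  | .tm R => if Classical.propDecidable (a ∈ R) |>.decide then .eps else .empty
  | .alt es => .alt (es.attach.map fun ⟨e, _⟩ => gderiv a e)
  | .seq [] => .empty
  | .seq (e :: es) =>
      .alt [.seq (gderiv a e :: es), .seq [.null e, gderiv a (.seq es)]]
  | .var (A, u) => .var (A, u ++ [a])
  | .null _ => .empty
termination_by e => sizeOf e
decreasing_by
  all_goals simp_wf
  all_goals try (rename_i he _; have := List.sizeOf_lt_of_mem he; omega)
  all_goals try (have := List.sizeOf_lt_of_mem ‹_ ∈ es›; omega)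
  all_goals omega

/-- Embedding of the base grammar expressions into the extended nonterminals. -/
def liftG {σ N : Type} : GExpr σ N → GExpr σ (N × List σ)
  | .empty => .empty
  | .eps => .eps
  | .tm R => .tm R
  | .alt es => .alt (es.attach.map fun ⟨e, _⟩ => liftG e)
  | .seq es => .seq (es.attach.map fun ⟨e, _⟩ => liftG e)
  | .var A => .var (A, [])
  | .null e => .null (liftG e)
termination_by e => sizeOf e
decreasing_by
  all_goals simp_wf
  all_goals try (have := List.sizeOf_lt_of_mem ‹_ ∈ es›; omega)
  all_goals omega

/-- The derived system of equations: the new nonterminal `(A, u)` is defined by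
the iterated derivative of (the lift of) the rule for `A` along `u`. -/
noncomputable def derivedRules {σ N : Type} (rules : N → GExpr σ N) :
    N × List σ → GExpr σ (N × List σ) :=
  fun p => p.2.foldl (fun e a => gderiv a e) (liftG (rules p.1))

/-!
Completeness, `a :: w ∈ L(e) → w ∈ L(d_a e)`, is an induction on the derivation of `a :: w`.
Soundness cannot be proved by induction on a derivation of `w ∈ L(d_a e)` alone, because
`d_a e` unfolds into choices and sequences that are not themselves derivatives. Instead one
inducts over derivations of any `x` with `Residual a x e`, a relation that contains
`(d_a e, e)`, is closed under these unfoldings, and implies `L(x) ⊆ a⁻¹ L(e)`. Nonterminals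
are handled by the equation `derivedRules (A, u ++ [a]) = d_a (derivedRules (A, u))`.
-/

variable {σ N : Type}

theorem derivedRules_append_singleton (rules : N → GExpr σ N) (A : N) (u : List σ) (a : σ) :
    derivedRules rules (A, u ++ [a]) = gderiv a (derivedRules rules (A, u)) := by
  simp [derivedRules, List.foldl_append]

theorem gderiv_tm_of_mem {a : σ} {R : Set σ} (h : a ∈ R) :
    (gderiv a (.tm R) : GExpr σ (N × List σ)) = .eps := by
  rw [gderiv]; simp [h]

theorem gderiv_tm_of_notMem {a : σ} {R : Set σ} (h : a ∉ R) :
    (gderiv a (.tm R) : GExpr σ (N × List σ)) = .empty := by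
  rw [gderiv]; simp [h]

theorem gderiv_alt (a : σ) (es : List (GExpr σ (N × List σ))) :
    gderiv a (.alt es) = .alt (es.map (gderiv a)) := by
  rw [gderiv]; simp

/-- A syntactic certificate for `L(x) ⊆ a⁻¹ L(e)` in the derived system. -/
inductive Residual (a : σ) : GExpr σ (N × List σ) → GExpr σ (N × List σ) → Prop
  | empty {e} : Residual a .empty e
  | tm {R} : a ∈ R → Residual a .eps (.tm R)
  | alt {xs es} (f : GExpr σ (N × List σ) → GExpr σ (N × List σ)) :
      xs = es.map f → (∀ e ∈ es, Residual a (f e) e) → Residual a (.alt xs) (.alt es)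
  | union {xs e} : (∀ x ∈ xs, Residual a x e) → Residual a (.alt xs) e
  | seqCons {x e es} : Residual a x e → Residual a (.seq (x :: es)) (.seq (e :: es))
  | seqNull {xs e es} :
      Residual a (.seq xs) (.seq es) → Residual a (.seq (.null e :: xs)) (.seq (e :: es))
  | seqSingleton {x e} : Residual a x e → Residual a (.seq [x]) e
  | var {A u} : Residual a (.var (A, u ++ [a])) (.var (A, u))

theorem residual_gderiv (a : σ) : ∀ e : GExpr σ (N × List σ), Residual a (gderiv a e) e
  | .empty => by rw [gderiv]; exact .empty
  | .eps => by rw [gderiv]; exact .empty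
  | .tm R => by
    by_cases h : a ∈ R
    · rw [gderiv_tm_of_mem h]; exact .tm h
    · rw [gderiv_tm_of_notMem h]; exact .empty
  | .alt es => by
    rw [gderiv_alt]
    exact .alt _ rfl fun e _ => residual_gderiv a e
  | .seq [] => by rw [gderiv]; exact .empty
  | .seq (e :: es) => by
    rw [gderiv]
    refine .union fun x hx => ?_
    simp only [List.mem_cons, List.not_mem_nil, or_false] at hx
    rcases hx with rfl | rfl
    · exact .seqCons (residual_gderiv a e)
    · exact .seqNull (.seqSingleton (residual_gderiv a (.seq es)))
  | .var (A, u) => by rw [gderiv]; exact .var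
  | .null e => by rw [gderiv]; exact .empty

theorem Gen.cons_of_residual {rules : N → GExpr σ N} {a : σ} {x e : GExpr σ (N × List σ)}
    {w : List σ} (h : Gen (derivedRules rules) x w) (hx : Residual a x e) :
    Gen (derivedRules rules) e (a :: w) := by
  induction h generalizing e with
  | eps => cases hx with | tm hR => exact .tm hR
  | tm => cases hx
  | alt hmem _ ih =>
    cases hx with
    | alt f hxs hres =>
      rw [hxs] at hmem
      obtain ⟨e', he', rfl⟩ := List.mem_map.1 hmem
      exact .alt he' (ih (hres e' he'))
    | union hres => exact ih (hres _ hmem)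
  | seqNil => cases hx
  | seqCons h₁ h₂ ih₁ ih₂ =>
    cases hx with
    | seqCons hres => exact .seqCons (ih₁ hres) h₂
    | seqNull hres =>
      cases h₁ with
      | null hnull => simpa using Gen.seqCons hnull (ih₂ hres)
    | seqSingleton hres =>
      cases h₂ with
      | seqNil => simpa using ih₁ hres
  | var _ ih =>
    cases hx with
    | @var A u =>
      refine .var (ih ?_)
      rw [derivedRules_append_singleton]
      exact residual_gderiv a _
  | null => cases hx

theorem Gen.gderiv_of_cons {rules : N → GExpr σ N} {a : σ} {e : GExpr σ (N × List σ)}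
    {w : List σ} (h : Gen (derivedRules rules) e (a :: w)) :
    Gen (derivedRules rules) (gderiv a e) w := by
  generalize hw : a :: w = w' at h
  induction h generalizing w with
  | eps => cases hw
  | tm hR =>
    obtain ⟨rfl, rfl⟩ := List.cons_eq_cons.1 hw
    rw [gderiv_tm_of_mem hR]
    exact .eps
  | alt hmem _ ih =>
    rw [gderiv_alt]
    exact .alt (List.mem_map_of_mem hmem) (ih hw)
  | seqNil => cases hw
  | @seqCons e es w₁ w₂ h₁ h₂ ih₁ ih₂ =>
    rw [gderiv]
    cases w₁ with
    | nil =>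
      refine .alt (List.mem_cons_of_mem _ List.mem_cons_self) ?_
      simpa using Gen.seqCons (.null h₁) (.seqCons (ih₂ hw) .seqNil)
    | cons b w₁ =>
      obtain ⟨rfl, rfl⟩ := List.cons_eq_cons.1 hw
      exact .alt List.mem_cons_self (.seqCons (ih₁ rfl) h₂)
  | @var p _ _ ih =>
    obtain ⟨A, u⟩ := p
    rw [gderiv]
    exact .var (by rw [derivedRules_append_singleton]; exact ih hw)
  | null => cases hw

/-- **Single-step correctness of derivative-based recognition for context-free
grammars**: for every grammar expression `e` over the derived system,
`L(d_a(e)) = {w | a :: w ∈ L(e)}`. -/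
theorem gderiv_correct {σ N : Type} (rules : N → GExpr σ N) (a : σ)
    (e : GExpr σ (N × List σ)) :
    {w : List σ | Gen (derivedRules rules) (gderiv a e) w} =
      {w : List σ | Gen (derivedRules rules) e (a :: w)} := by
  ext w
  exact ⟨fun h => h.cons_of_residual (residual_gderiv a e), Gen.gderiv_of_cons⟩
end

section
/- Lemma (Property 1 of partial lexing): for every input string ω, every lexical prefix in the lexer state computed by the incremental partial-lex procedure has the property that the concatenation of the already-matched (left-of-annotation) lexeme strings equals ω exactly. -/
/-- An annotated lexical prefix: a list of completed lexemes (each a concrete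
string together with its lexeme class), and optionally an in-progress lexeme
(the concrete string matched so far together with its class; its Brzozowski
remainder is the left quotient of the class by that string). -/
abbrev LexPfx (α : Type) (k : ℕ) : Type :=
  List (List α × Fin k) × Option (List α × Fin k)

/-- The entries (completed lexemes followed by the in-progress one) of an
annotated lexical prefix. -/
def entriesOf {α : Type} {k : ℕ} (p : LexPfx α k) : List (List α × Fin k) :=
  p.1 ++ p.2.toList

/-- One-character extension of an annotated lexical prefix by `a`: either start
a new lexeme (when there is none in progress) in any class whose derivative by
`a` is nonempty, or continue the in-progress lexeme (when the corresponding
derivative stays nonempty), or close the in-progress lexeme (when its remainder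
is nullable, i.e. the matched string is in its class) and start a new one. -/
inductive ExtendsBy {α : Type} {k : ℕ} (C : Fin k → Language α) (a : α) :
    LexPfx α k → LexPfx α k → Prop
  | start {done : List (List α × Fin k)} {i : Fin k} :
      {u : List α | a :: u ∈ C i}.Nonempty →
      ExtendsBy C a (done, none) (done, some ([a], i))
  | continue_ {done : List (List α × Fin k)} {x : List α} {i : Fin k} :
      {u : List α | (x ++ [a]) ++ u ∈ C i}.Nonempty →
      ExtendsBy C a (done, some (x, i)) (done, some (x ++ [a], i))
  | close {done : List (List α × Fin k)} {x : List α} {i i' : Fin k} :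
      x ∈ C i → {u : List α | a :: u ∈ C i'}.Nonempty →
      ExtendsBy C a (done, some (x, i)) (done ++ [(x, i)], some ([a], i'))

/-- `p'` dominates `p` in the maximal munch order: they agree on the first `j`
lexemes, and at position `j` the matched string of `p'` is strictly longer than
that of `p` and is complete (its remainder is nullable, i.e. it belongs to its
class). -/
def Dominates {α : Type} {k : ℕ} (C : Fin k → Language α)
    (p' p : LexPfx α k) : Prop :=
  ∃ (j : ℕ) (x x' : List α) (i i' : Fin k),
    (entriesOf p).take j = (entriesOf p').take j ∧
    (entriesOf p)[j]? = some (x, i) ∧ (entriesOf p')[j]? = some (x', i') ∧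
    x.length < x'.length ∧ x' ∈ C i'

/-- One step of the partial lexer: extend every viable partial lex by the next
character, then discard the partial lexes dominated (in the maximal munch
order) by another partial lex of the same input. -/
def lexStep {α : Type} {k : ℕ} (C : Fin k → Language α)
    (S : Set (LexPfx α k)) (a : α) : Set (LexPfx α k) :=
  {q | (∃ p ∈ S, ExtendsBy C a p q) ∧
    ¬ ∃ p', (∃ p ∈ S, ExtendsBy C a p p') ∧ Dominates C p' q}

/-- The lexer state after consuming `ω`, processing characters left to right
starting from the initial state containing only the empty lexical prefix. -/
def lexState {α : Type} {k : ℕ} (C : Fin k → Language α) (ω : List α) :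
    Set (LexPfx α k) :=
  ω.foldl (lexStep C) {(([] : List (List α × Fin k)), (none : Option (List α × Fin k)))}

/-- `ls` is a well-formed annotated lex: every lexeme is a nonempty string
belonging to its class. -/
def WfLex {α : Type} {k : ℕ} (C : Fin k → Language α)
    (ls : List (List α × Fin k)) : Prop :=
  ∀ l ∈ ls, l.1 ≠ [] ∧ l.1 ∈ C l.2

/-- `ls` is an (annotated) lex of the string `ω`. -/
def IsLexAnn {α : Type} {k : ℕ} (C : Fin k → Language α) (ω : List α)
    (ls : List (List α × Fin k)) : Prop :=
  (ls.map Prod.fst).flatten = ω ∧ WfLex C ls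

/-- `ls` is the maximal munch lex of `ω`: a lex which is lexicographically
maximal in lexeme lengths from left to right. -/
def IsMaxMunchAnn {α : Type} {k : ℕ} (C : Fin k → Language α) (ω : List α)
    (ls : List (List α × Fin k)) : Prop :=
  IsLexAnn C ω ls ∧ ∀ ls' : List (List α × Fin k), IsLexAnn C ω ls' →
    ∀ (j : ℕ) (lj lj' : List α × Fin k), ls.take j = ls'.take j →
      ls[j]? = some lj → ls'[j]? = some lj' → lj'.1.length ≤ lj.1.length

/-- A (complete) annotated lex `ls` matches the lexical prefix `p` if `ls`
begins with the completed lexemes of `p` and, if `p` has an in-progress lexeme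
`(x, i)`, the next lexeme of `ls` has class `i` and extends the string `x`. -/
def MatchesPfx {α : Type} {k : ℕ} (p : LexPfx α k)
    (ls : List (List α × Fin k)) : Prop :=
  match p.2 with
  | none => p.1 <+: ls
  | some (x, i) => ∃ (l : List α) (rest : List (List α × Fin k)),
      ls = p.1 ++ (l, i) :: rest ∧ x <+: l

/-- Remove the ignorable lexemes (those of class `ign`) from a lex. -/
def removeIgn {α : Type} {k : ℕ} (ign : Fin k)
    (ls : List (List α × Fin k)) : List (List α × Fin k) :=
  ls.filter (fun l => decide (l.2 ≠ ign))

lemma flatten_extendsBy {α : Type} {k : ℕ} {C : Fin k → Language α} {a : α}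
    {p q : LexPfx α k} (h : ExtendsBy C a p q) :
    ((entriesOf q).map Prod.fst).flatten =
      ((entriesOf p).map Prod.fst).flatten ++ [a] := by
  cases h <;> simp [entriesOf]

lemma flatten_foldl {α : Type} {k : ℕ} (C : Fin k → Language α)
    (ω : List α) : ∀ (S : Set (LexPfx α k)) (w : List α),
    (∀ p ∈ S, ((entriesOf p).map Prod.fst).flatten = w) →
    ∀ p ∈ ω.foldl (lexStep C) S, ((entriesOf p).map Prod.fst).flatten = w ++ ω := by
  induction ω with
  | nil => intro S w h p hp; simpa using h p hp
  | cons a ω ih =>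
    intro S w h p hp
    have : w ++ a :: ω = (w ++ [a]) ++ ω := by simp
    rw [this]
    refine ih (lexStep C S a) (w ++ [a]) ?_ p hp
    rintro q ⟨⟨r, hr, hext⟩, -⟩
    rw [flatten_extendsBy hext, h r hr]

/-- **Property 1 of partial lexing**: for every input string `ω`, every lexical
prefix in the lexer state for `ω` is such that the concatenation of its
already-matched lexeme strings (the completed lexemes together with the matched
part of the in-progress lexeme) equals `ω` exactly. -/
theorem partial_lexing_property1 {α : Type} {k : ℕ} (C : Fin k → Language α)
    (ω : List α) (p : LexPfx α k) (hp : p ∈ lexState C ω) :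
    ((entriesOf p).map Prod.fst).flatten = ω := by
  have := flatten_foldl C ω {(([] : List (List α × Fin k)), (none : Option (List α × Fin k)))} [] ?_ p hp
  · simpa using this
  · rintro q rfl; simp [entriesOf]
end
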